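/- arXiv:2202.07777 — 2 statements merged into one kernel-verified Lean document; each statement's English description precedes it below -/
import Mathlib

section
/- For n = 4, with a_1 = (f_0 a_0 + e_1)/(1 − f_0 a_0 e_1), a_2 = (f_1 a_1 + e_2)/(1 − f_1 a_1 e_2), a_3 = (f_2 a_2 + e_3)/(1 − f_2 a_2 e_3), a_4 = (f_3 a_3 + e_0)/(1 − f_3 a_3 e_0), the numerator of a_0 − a_4 (after clearing the product of denominators) equals q_2 a_0² + q_1 a_0 + q_0 with q_2 = f_0[e_0 f_3(e_1 e_2 f_2 + e_2 e_3 f_1 + e_1 e_3 − f_1 f_2) + e_1 e_2 e_3 f_2 − e_3 f_1 f_2 − e_2 f_1 − e_1], q_0 = e_0(e_1 e_3 f_1 f_2 + e_1 e_2 f_1 + e_2 e_3 f_2 − 1) + f_3(e_1 e_2 e_3 f_1 − e_1 f_1 f_2 − e_2 f_2 − e_3), and q_1 = e_1 e_2 f_0 f_2 f_3 + e_2 e_3 f_0 f_1 f_3 + e_1 e_3 f_0 f_3 − e_1 e_3 f_1 f_2 − f_0 f_1 f_2 f_3 − e_1 e_2 f_1 − e_2 e_3 f_2 + 1 + e_0(e_1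 e_2 e_3 f_1 f_3 − e_1 e_2 e_3 f_0 f_2 − e_1 f_1 f_2 f_3 + e_3 f_0 f_1 f_2 + e_2 f_0 f_1 − e_2 f_2 f_3 + e_1 f_0 − e_3 f_3). -/
/-- Explicit closure condition for `n = 4`: clearing the four step denominators from
`a_0 − a_4` yields the quadratic `q_2 a_0² + q_1 a_0 + q_0` with the explicit
coefficients of the paper. -/
theorem closure_n4_explicit (f0 f1 f2 f3 e0 e1 e2 e3 a0 a1 a2 a3 a4 : ℂ)
    (hd1 : 1 - f0 * a0 * e1 ≠ 0) (hd2 : 1 - f1 * a1 * e2 ≠ 0)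
    (hd3 : 1 - f2 * a2 * e3 ≠ 0) (hd4 : 1 - f3 * a3 * e0 ≠ 0)
    (ha1 : a1 = (f0 * a0 + e1) / (1 - f0 * a0 * e1))
    (ha2 : a2 = (f1 * a1 + e2) / (1 - f1 * a1 * e2))
    (ha3 : a3 = (f2 * a2 + e3) / (1 - f2 * a2 * e3))
    (ha4 : a4 = (f3 * a3 + e0) / (1 - f3 * a3 * e0)) :
    (a0 - a4) * ((1 - f0 * a0 * e1) * (1 - f1 * a1 * e2) * (1 - f2 * a2 * e3) *
        (1 - f3 * a3 * e0)) =
      (f0 * (e0 * f3 * (e1 * e2 * f2 + e2 * e3 * f1 + e1 * e3 - f1 * f2) +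
        e1 * e2 * e3 * f2 - e3 * f1 * f2 - e2 * f1 - e1)) * a0 ^ 2 +
      (e1 * e2 * f0 * f2 * f3 + e2 * e3 * f0 * f1 * f3 + e1 * e3 * f0 * f3
        - e1 * e3 * f1 * f2 - f0 * f1 * f2 * f3 - e1 * e2 * f1 - e2 * e3 * f2 + 1
        + e0 * (e1 * e2 * e3 * f1 * f3 - e1 * e2 * e3 * f0 * f2 - e1 * f1 * f2 * f3
          + e3 * f0 * f1 * f2 + e2 * f0 * f1 - e2 * f2 * f3 + e1 * f0 - e3 * f3)) * a0 +
      (e0 * (e1 * e3 * f1 * f2 + e1 * e2 * f1 + e2 * e3 * f2 - 1) +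
        f3 * (e1 * e2 * e3 * f1 - e1 * f1 * f2 - e2 * f2 - e3)) := by
  rw [eq_div_iff hd1] at ha1
  rw [eq_div_iff hd2] at ha2
  rw [eq_div_iff hd3] at ha3
  rw [eq_div_iff hd4] at ha4
  linear_combination
    (-((1 - f0 * a0 * e1) * (1 - f1 * a1 * e2) * (1 - f2 * a2 * e3))) * ha4 +
    (-(f3 * (1 + a0 * e0) * (1 - f0 * a0 * e1) * (1 - f1 * a1 * e2))) * ha3 +
    (-(f2 * (e3 * (a0 - e0) + f3 * (1 + a0 * e0)) * (1 - f0 * a0 * e1))) * ha2 +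
    (-(f1 * (e2 * ((a0 - e0) - e3 * f3 * (1 + a0 * e0)) +
        f2 * (e3 * (a0 - e0) + f3 * (1 + a0 * e0))))) * ha1
end

section
/- Let δ ∈ (0, π), λ ∈ (0, π) with δ ≠ λ, and let f be a given nonzero real number. Then the equation sin δ′ − sin λ − f · sin(δ′ − λ) = 0 has exactly one solution δ′ ∈ (0, π) with δ′ ≠ λ, for generic f (precisely: the equation, viewed in the half-angle tangent d = tan(δ′/2), is a quadratic with root d = tan(λ/2) corresponding to the excluded case δ′ = λ, leaving exactly one further root). -/
open Real

/-!
With `c = cos (x/2)` and `t = tan (x/2)`, the identities `sin x = 2 t c²`, `cos x = (1 - t²) c²`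
and `1 = (1 + t²) c²` turn `sin x - sin λ - f sin (x - λ)` into `c²` times a quadratic in `t`.
At `x = λ` the trigonometric expression vanishes, so `tan (λ/2)` is a root; the derivative of the
quadratic there is `2 (cos λ - f)`, so for `f ≠ cos λ` this root is simple and Vieta's formula
supplies exactly one other root.
-/

theorem existsUnique_root_ne_of_root {K : Type*} [Field K] {a b c t : K} (ha : a ≠ 0)
    (ht : a * t ^ 2 + b * t + c = 0) (hsimple : 2 * a * t + b ≠ 0) :
    ∃! d : K, d ≠ t ∧ a * d ^ 2 + b * d + c = 0 := by
  have hfactor : ∀ d, a * d ^ 2 + b * d + c = (d - t) * (a * (d + t) + b) := fun d => by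
    linear_combination ht
  have hvieta : ∀ d, a * (d + t) + b = 0 ↔ d = -b / a - t := fun d => by
    rw [eq_sub_iff_add_eq, eq_div_iff ha]
    constructor <;> intro h <;> linear_combination h
  refine ⟨-b / a - t, ⟨fun h => hsimple ?_, ?_⟩, ?_⟩
  · linear_combination (hvieta t).2 h.symm
  · rw [hfactor, (hvieta _).2 rfl, mul_zero]
  · rintro d ⟨hdt, hd⟩
    rw [hfactor] at hd
    exact (hvieta d).1 ((mul_eq_zero.1 hd).resolve_left (sub_ne_zero.2 hdt))

namespace Real

theorem cos_half_pos {x : ℝ} (hx : x ∈ Set.Ioo (-π) π) : 0 < cos (x / 2) :=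
  cos_pos_of_mem_Ioo ⟨by linarith [hx.1], by linarith [hx.2]⟩

theorem sin_eq_two_mul_tan_half_mul_cos_half_sq {x : ℝ} (hx : cos (x / 2) ≠ 0) :
    sin x = 2 * tan (x / 2) * cos (x / 2) ^ 2 := by
  conv_lhs => rw [← mul_div_cancel₀ x two_ne_zero, sin_two_mul]
  rw [tan_eq_sin_div_cos]
  field_simp

theorem cos_eq_one_sub_tan_half_sq_mul_cos_half_sq {x : ℝ} (hx : cos (x / 2) ≠ 0) :
    cos x = (1 - tan (x / 2) ^ 2) * cos (x / 2) ^ 2 := by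
  conv_lhs => rw [← mul_div_cancel₀ x two_ne_zero, cos_two_mul, ← sin_sq_add_cos_sq (x / 2)]
  rw [tan_eq_sin_div_cos]
  field_simp
  ring

theorem one_add_tan_half_sq_mul_cos_half_sq {x : ℝ} (hx : cos (x / 2) ≠ 0) :
    (1 + tan (x / 2) ^ 2) * cos (x / 2) ^ 2 = 1 := by
  rw [← inv_one_add_tan_sq hx, mul_inv_cancel₀ (by positivity)]

theorem sin_mul_tan_half {x : ℝ} (hx : cos (x / 2) ≠ 0) : sin x * tan (x / 2) = 1 - cos x := by
  rw [sin_eq_two_mul_tan_half_mul_cos_half_sq hx, cos_eq_one_sub_tan_half_sq_mul_cos_half_sq hx]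
  linear_combination one_add_tan_half_sq_mul_cos_half_sq hx

end Real

noncomputable def isogramQuadratic (lam f d : ℝ) : ℝ :=
  -(sin lam) * (1 + f) * d ^ 2 + 2 * (1 - f * cos lam) * d + sin lam * (f - 1)

theorem sin_sub_sin_sub_mul_sin_sub_eq_cos_half_sq_mul {x : ℝ} (lam f : ℝ)
    (hx : cos (x / 2) ≠ 0) :
    sin x - sin lam - f * sin (x - lam) =
      cos (x / 2) ^ 2 * isogramQuadratic lam f (tan (x / 2)) := by
  rw [isogramQuadratic, sin_sub, sin_eq_two_mul_tan_half_mul_cos_half_sq hx,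
    cos_eq_one_sub_tan_half_sq_mul_cos_half_sq hx]
  linear_combination sin lam * one_add_tan_half_sq_mul_cos_half_sq hx

theorem isogramQuadratic_tan_half_self {lam : ℝ} (f : ℝ) (hlam : cos (lam / 2) ≠ 0) :
    isogramQuadratic lam f (tan (lam / 2)) = 0 := by
  have h := sin_sub_sin_sub_mul_sin_sub_eq_cos_half_sq_mul lam f hlam
  rw [sub_self, sub_self, sin_zero, mul_zero, sub_zero] at h
  exact (mul_eq_zero.1 h.symm).resolve_left (pow_ne_zero 2 hlam)

theorem delta_recovery_quadratic_general (lam f : ℝ)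
    (hlam : lam ∈ Set.Ioo 0 π)
    (hf1 : f ≠ -1) (hfc : f ≠ Real.cos lam) :
    (∀ δ' ∈ Set.Ioo 0 π,
      (Real.sin δ' - Real.sin lam - f * Real.sin (δ' - lam) = 0 ↔
        -(Real.sin lam) * (1 + f) * Real.tan (δ' / 2) ^ 2
          + 2 * (1 - f * Real.cos lam) * Real.tan (δ' / 2)
          + Real.sin lam * (f - 1) = 0)) ∧
    (-(Real.sin lam) * (1 + f) * Real.tan (lam / 2) ^ 2
        + 2 * (1 - f * Real.cos lam) * Real.tan (lam / 2)
        + Real.sin lam * (f - 1) = 0) ∧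
    (∃! d : ℝ, d ≠ Real.tan (lam / 2) ∧
      -(Real.sin lam) * (1 + f) * d ^ 2 + 2 * (1 - f * Real.cos lam) * d
        + Real.sin lam * (f - 1) = 0) := by
  have hIoo : ∀ x ∈ Set.Ioo 0 π, cos (x / 2) ≠ 0 := fun x hx =>
    (cos_half_pos ⟨by linarith [hx.1, pi_pos], hx.2⟩).ne'
  have hlam2 := hIoo lam hlam
  refine ⟨fun δ' hδ' => ?_, isogramQuadratic_tan_half_self f hlam2, ?_⟩
  · rw [sin_sub_sin_sub_mul_sin_sub_eq_cos_half_sq_mul lam f (hIoo δ' hδ')]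
    exact mul_eq_zero_iff_left (pow_ne_zero 2 (hIoo δ' hδ'))
  · have ha : -(sin lam) * (1 + f) ≠ 0 :=
      mul_ne_zero (neg_ne_zero.2 (sin_pos_of_pos_of_lt_pi hlam.1 hlam.2).ne')
        (fun h => hf1 (by linarith))
    have hsimple : 2 * (-(sin lam) * (1 + f)) * tan (lam / 2) + 2 * (1 - f * cos lam) ≠ 0 :=
      fun h => hfc (by linear_combination (-1 / 2) * h - (1 + f) * sin_mul_tan_half hlam2)
    exact existsUnique_root_ne_of_root ha (isogramQuadratic_tan_half_self f hlam2) hsimple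

/-- Recovery of the isogram parameter `δ′` from the transmission ratio `f`: the equation
`sin δ′ − sin λ − f·sin(δ′ − λ) = 0`, viewed in the half-angle tangent `d = tan(δ′/2)`,
becomes the quadratic `−sin λ·(1+f)·d² + 2(1 − f cos λ)·d + sin λ·(f−1) = 0`, which always
has the spurious root `d = tan(λ/2)` (corresponding to the excluded case `δ′ = λ`) and, for
generic `f` (`f ≠ 0, −1, cos λ`), exactly one further root. -/
theorem delta_recovery_quadratic (δ lam f : ℝ)
    (hδ : δ ∈ Set.Ioo 0 π) (hlam : lam ∈ Set.Ioo 0 π) (hne : δ ≠ lam)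
    (hf : f ≠ 0) (hf1 : f ≠ -1) (hfc : f ≠ Real.cos lam) :
    (∀ δ' ∈ Set.Ioo 0 π,
      (Real.sin δ' - Real.sin lam - f * Real.sin (δ' - lam) = 0 ↔
        -(Real.sin lam) * (1 + f) * Real.tan (δ' / 2) ^ 2
          + 2 * (1 - f * Real.cos lam) * Real.tan (δ' / 2)
          + Real.sin lam * (f - 1) = 0)) ∧
    (-(Real.sin lam) * (1 + f) * Real.tan (lam / 2) ^ 2
        + 2 * (1 - f * Real.cos lam) * Real.tan (lam / 2)
        + Real.sin lam * (f - 1) = 0) ∧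
    (∃! d : ℝ, d ≠ Real.tan (lam / 2) ∧
      -(Real.sin lam) * (1 + f) * d ^ 2 + 2 * (1 - f * Real.cos lam) * d
        + Real.sin lam * (f - 1) = 0) :=
  delta_recovery_quadratic_general lam f hlam hf1 hfc
end
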